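/- Let D ⊆ ℂ be a convex open set, ℓ ∈ ℕ, and g holomorphic on D. Then Ψ_ℓ g is holomorphic on D×D and satisfies P(Ψ_ℓ g) = −ℓ(ℓ+1) Ψ_ℓ g on D×D. -/

import Mathlib

open Complex MeasureTheory intervalIntegral

set_option synthInstance.maxHeartbeats 1000000
set_option maxHeartbeats 2000000

noncomputable section

/-- Partial derivative in the first variable. -/
def pd1 (f : ℂ × ℂ → ℂ) (p : ℂ × ℂ) : ℂ := deriv (fun w => f (w, p.2)) p.1

/-- Partial derivative in the second variable. -/
def pd2 (f : ℂ × ℂ → ℂ) (p : ℂ × ℂ) : ℂ := deriv (fun w => f (p.1, w)) p.2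

/-- The differential operator
`(Pf)(ζ₁,ζ₂) = (ζ₁−ζ₂)² ∂²f/∂ζ₁∂ζ₂ − (ζ₁−ζ₂)(∂f/∂ζ₁ − ∂f/∂ζ₂)`. -/
def Pop (f : ℂ × ℂ → ℂ) (p : ℂ × ℂ) : ℂ :=
  (p.1 - p.2) ^ 2 * pd1 (pd2 f) p - (p.1 - p.2) * (pd1 f p - pd2 f p)

/-- The holographic operator
`(Ψ_ℓ g)(ζ₁,ζ₂) = (ζ₁−ζ₂)^ℓ ∫_{−1}^{1} g(((ζ₂−ζ₁)v + ζ₁ + ζ₂)/2)(1−v²)^ℓ dv`. -/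
def Psi (ℓ : ℕ) (g : ℂ → ℂ) (p : ℂ × ℂ) : ℂ :=
  (p.1 - p.2) ^ ℓ *
    ∫ v in (-1 : ℝ)..1,
      g (((p.2 - p.1) * (v : ℂ) + p.1 + p.2) / 2) * ((1 : ℂ) - (v : ℂ) ^ 2) ^ ℓ

namespace Statement12Aux

/-- The point on the segment from `p.1` to `p.2` with parameter `v ∈ [-1,1]`. -/
def phi (v : ℝ) (p : ℂ × ℂ) : ℂ := ((p.2 - p.1) * (v : ℂ) + p.1 + p.2) / 2

/-- The (constant in `p`) Fréchet derivative of `phi v`. -/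
def Dphi (v : ℝ) : ℂ × ℂ →L[ℂ] ℂ :=
  ((1 - (v : ℂ)) / 2) • ContinuousLinearMap.fst ℂ ℂ ℂ
    + ((1 + (v : ℂ)) / 2) • ContinuousLinearMap.snd ℂ ℂ ℂ

lemma Dphi_apply (v : ℝ) (q : ℂ × ℂ) :
    Dphi v q = ((1 - (v : ℂ)) / 2) * q.1 + ((1 + (v : ℂ)) / 2) * q.2 := by
  simp [Dphi]

lemma phi_eq_Dphi (v : ℝ) (p : ℂ × ℂ) : phi v p = Dphi v p := by
  rw [Dphi_apply]; unfold phi; ring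

lemma hasFDerivAt_phi (v : ℝ) (p : ℂ × ℂ) : HasFDerivAt (phi v) (Dphi v) p := by
  have : phi v = fun p => Dphi v p := funext fun p => phi_eq_Dphi v p
  rw [this]; exact (Dphi v).hasFDerivAt

lemma continuous_phi (p : ℂ × ℂ) : Continuous fun v : ℝ => phi v p := by
  unfold phi; fun_prop

lemma continuous_Dphi : Continuous Dphi := by
  unfold Dphi; fun_prop

lemma norm_Dphi_apply_le {v : ℝ} (hv : v ∈ Set.uIcc (-1:ℝ) 1) (q : ℂ × ℂ) :
    ‖Dphi v q‖ ≤ ‖q‖ := by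
  rw [Set.uIcc_of_le (by norm_num : (-1:ℝ) ≤ 1)] at hv
  obtain ⟨h1, h2⟩ := hv
  have e1 : ((1 - (v:ℂ))/2) = (((1 - v)/2 : ℝ) : ℂ) := by push_cast; ring
  have e2 : ((1 + (v:ℂ))/2) = (((1 + v)/2 : ℝ) : ℂ) := by push_cast; ring
  rw [Dphi_apply, e1, e2]
  calc ‖(((1 - v)/2 : ℝ):ℂ) * q.1 + (((1 + v)/2 : ℝ):ℂ) * q.2‖
      ≤ ‖(((1 - v)/2 : ℝ):ℂ) * q.1‖ + ‖(((1 + v)/2 : ℝ):ℂ) * q.2‖ := norm_add_le _ _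
    _ = (1-v)/2 * ‖q.1‖ + (1+v)/2 * ‖q.2‖ := by
        rw [norm_mul, norm_mul, Complex.norm_real, Complex.norm_real,
          Real.norm_of_nonneg (by linarith), Real.norm_of_nonneg (by linarith)]
    _ ≤ (1-v)/2 * ‖q‖ + (1+v)/2 * ‖q‖ := by
        have := norm_fst_le q
        have := norm_snd_le q
        gcongr <;> linarith
    _ = ‖q‖ := by ring

lemma norm_Dphi_le {v : ℝ} (hv : v ∈ Set.uIcc (-1:ℝ) 1) : ‖Dphi v‖ ≤ 1 :=
  ContinuousLinearMap.opNorm_le_bound _ zero_le_one fun q => by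
    rw [one_mul]; exact norm_Dphi_apply_le hv q

lemma phi_mem_segment {v : ℝ} (hv : v ∈ Set.uIcc (-1:ℝ) 1) (p : ℂ × ℂ) :
    phi v p ∈ segment ℝ p.1 p.2 := by
  rw [Set.uIcc_of_le (by norm_num : (-1:ℝ) ≤ 1)] at hv
  refine ⟨(1-v)/2, (1+v)/2, by linarith [hv.1, hv.2], by linarith [hv.1, hv.2], by ring, ?_⟩
  simp only [Complex.real_smul]
  unfold phi; push_cast; ring

lemma phi_mem_D {D : Set ℂ} (hconv : Convex ℝ D) {p : ℂ × ℂ} (hp : p ∈ D ×ˢ D) :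
    ∀ v ∈ Set.uIcc (-1:ℝ) 1, phi v p ∈ D := fun v hv =>
  hconv.segment_subset hp.1 hp.2 (phi_mem_segment hv p)

lemma exists_good_ball {D : Set ℂ} (hD : IsOpen D) (hconv : Convex ℝ D)
    {p : ℂ × ℂ} (hp : p ∈ D ×ˢ D) :
    ∃ ε > 0, ∃ K : Set ℂ, IsCompact K ∧ K ⊆ D ∧
      ∀ q ∈ Metric.ball p ε, ∀ v ∈ Set.uIcc (-1:ℝ) 1, phi v q ∈ K := by
  have hseg : segment ℝ p.1 p.2 ⊆ D := hconv.segment_subset hp.1 hp.2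
  have hcomp : IsCompact (segment ℝ p.1 p.2) := by
    rw [segment_eq_image]
    exact isCompact_Icc.image (by fun_prop)
  obtain ⟨δ, hδ, hsub⟩ := hcomp.exists_thickening_subset_open hD hseg
  refine ⟨δ/2, by linarith, Metric.cthickening (δ/2) (segment ℝ p.1 p.2),
    hcomp.cthickening, ?_, ?_⟩
  · exact (Metric.cthickening_subset_thickening' hδ (by linarith) _).trans hsub
  · intro q hq v hv
    apply Metric.mem_cthickening_of_dist_le _ (phi v p) _ _ (phi_mem_segment hv p)
    have hd : phi v q - phi v p = Dphi v (q - p) := by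
      rw [phi_eq_Dphi, phi_eq_Dphi, map_sub]
    rw [dist_eq_norm, hd]
    calc ‖Dphi v (q-p)‖ ≤ ‖q - p‖ := norm_Dphi_apply_le hv _
      _ ≤ δ/2 := by
          rw [← dist_eq_norm]
          exact (Metric.mem_ball.mp hq).le

/-- The parametrized integral operator. -/
def T (h : ℂ → ℂ) (w : ℝ → ℂ) (p : ℂ × ℂ) : ℂ := ∫ v in (-1:ℝ)..1, h (phi v p) * w v

lemma integrand_contOn {D : Set ℂ} {h : ℂ → ℂ} (hh : ContinuousOn h D)
    {w : ℝ → ℂ} (hw : Continuous w) {p : ℂ × ℂ}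
    (hφ : ∀ v ∈ Set.uIcc (-1:ℝ) 1, phi v p ∈ D) :
    ContinuousOn (fun v => h (phi v p) * w v) (Set.uIcc (-1:ℝ) 1) :=
  (hh.comp (continuous_phi p).continuousOn fun v hv => hφ v hv).mul hw.continuousOn

lemma Fprime_contOn {D : Set ℂ} {h : ℂ → ℂ} (hh' : ContinuousOn (deriv h) D)
    {w : ℝ → ℂ} (hw : Continuous w) {p : ℂ × ℂ}
    (hφ : ∀ v ∈ Set.uIcc (-1:ℝ) 1, phi v p ∈ D) :
    ContinuousOn (fun v => (deriv h (phi v p) * w v) • Dphi v) (Set.uIcc (-1:ℝ) 1) :=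
  (integrand_contOn hh' hw hφ).smul continuous_Dphi.continuousOn

/-- Differentiation under the integral sign for `T`. -/
lemma hasFDerivAt_T {D : Set ℂ} (hD : IsOpen D) (hconv : Convex ℝ D)
    {h : ℂ → ℂ} (hh : DifferentiableOn ℂ h D) (hh' : ContinuousOn (deriv h) D)
    {w : ℝ → ℂ} (hw : Continuous w) {p : ℂ × ℂ} (hp : p ∈ D ×ˢ D) :
    HasFDerivAt (T h w)
      (∫ v in (-1:ℝ)..1, (deriv h (phi v p) * w v) • Dphi v) p := by
  obtain ⟨ε, hε, K, hK, hKD, hball⟩ := exists_good_ball hD hconv hp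
  have hφp : ∀ v ∈ Set.uIcc (-1:ℝ) 1, phi v p ∈ D := fun v hv =>
    hKD (hball p (Metric.mem_ball_self hε) v hv)
  obtain ⟨C, hC⟩ := hK.exists_bound_of_continuousOn (hh'.mono hKD)
  obtain ⟨Cw, hCw⟩ := (isCompact_uIcc (a := (-1:ℝ)) (b := 1)).exists_bound_of_continuousOn
    hw.continuousOn
  have hC0 : (0:ℝ) ≤ max C 0 := le_max_right _ _
  have hCw0 : (0:ℝ) ≤ max Cw 0 := le_max_right _ _
  show HasFDerivAt (fun q => ∫ v in (-1:ℝ)..1, h (phi v q) * w v) _ p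
  refine intervalIntegral.hasFDerivAt_integral_of_dominated_of_fderiv_le
    (F' := fun q v => (deriv h (phi v q) * w v) • Dphi v)
    (bound := fun _ => max C 0 * max Cw 0) (Metric.ball_mem_nhds p hε) ?_ ?_ ?_ ?_ ?_ ?_
  · -- measurability of F q, eventually in q
    filter_upwards [Metric.ball_mem_nhds p hε] with q hq
    have hφq : ∀ v ∈ Set.uIcc (-1:ℝ) 1, phi v q ∈ D := fun v hv => hKD (hball q hq v hv)
    exact ((integrand_contOn hh.continuousOn hw hφq).mono
      Set.uIoc_subset_uIcc).aestronglyMeasurable measurableSet_uIoc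
  · exact (integrand_contOn hh.continuousOn hw hφp).intervalIntegrable
  · exact ((Fprime_contOn hh' hw hφp).mono
      Set.uIoc_subset_uIcc).aestronglyMeasurable measurableSet_uIoc
  · -- the uniform bound
    refine Filter.Eventually.of_forall fun v hv q hq => ?_
    have hv' : v ∈ Set.uIcc (-1:ℝ) 1 := Set.uIoc_subset_uIcc hv
    have hmem : phi v q ∈ K := hball q hq v hv'
    have h1 : ‖deriv h (phi v q) * w v‖ ≤ max C 0 * max Cw 0 := by
      rw [norm_mul]
      exact mul_le_mul ((hC _ hmem).trans (le_max_left _ _))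
        ((hCw v hv').trans (le_max_left _ _)) (norm_nonneg _) hC0
    show ‖(deriv h (phi v q) * w v) • Dphi v‖ ≤ max C 0 * max Cw 0
    refine le_trans (ContinuousLinearMap.opNorm_smul_le _ _) ?_
    calc ‖deriv h (phi v q) * w v‖ * ‖Dphi v‖
        ≤ (max C 0 * max Cw 0) * 1 :=
          mul_le_mul h1 (norm_Dphi_le hv') (norm_nonneg _) (by positivity)
      _ = max C 0 * max Cw 0 := mul_one _
  · exact intervalIntegrable_const
  · -- pointwise differentiability
    refine Filter.Eventually.of_forall fun v hv q hq => ?_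
    have hv' : v ∈ Set.uIcc (-1:ℝ) 1 := Set.uIoc_subset_uIcc hv
    have hmemD : phi v q ∈ D := hKD (hball q hq v hv')
    have hder : HasDerivAt h (deriv h (phi v q)) (phi v q) :=
      (hh.differentiableAt (hD.mem_nhds hmemD)).hasDerivAt
    have hcomp : HasFDerivAt (fun q' => h (phi v q')) (deriv h (phi v q) • Dphi v) q :=
      hder.comp_hasFDerivAt q (hasFDerivAt_phi v q)
    have := hcomp.mul_const (w v)
    have e : (deriv h (phi v q) * w v) • Dphi v = w v • deriv h (phi v q) • Dphi v := by
      rw [smul_smul, mul_comm]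
    show HasFDerivAt _ ((deriv h (phi v q) * w v) • Dphi v) q
    rw [e]; exact this

lemma intervalIntegrable_Fprime {D : Set ℂ} {h : ℂ → ℂ} (hh' : ContinuousOn (deriv h) D)
    {w : ℝ → ℂ} (hw : Continuous w) {p : ℂ × ℂ}
    (hφ : ∀ v ∈ Set.uIcc (-1:ℝ) 1, phi v p ∈ D) :
    IntervalIntegrable (fun v => (deriv h (phi v p) * w v) • Dphi v) volume (-1) 1 :=
  (Fprime_contOn hh' hw hφ).intervalIntegrable

/-- Partial derivative of `T` in the first variable. -/
lemma hasDerivAt_T_fst {D : Set ℂ} (hD : IsOpen D) (hconv : Convex ℝ D)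
    {h : ℂ → ℂ} (hh : DifferentiableOn ℂ h D) (hh' : ContinuousOn (deriv h) D)
    {w : ℝ → ℂ} (hw : Continuous w) {p : ℂ × ℂ} (hp : p ∈ D ×ˢ D) :
    HasDerivAt (fun z => T h w (z, p.2))
      (T (deriv h) (fun v => w v * ((1 - (v : ℂ)) / 2)) p) p.1 := by
  have H := hasFDerivAt_T hD hconv hh hh' hw hp
  have hline : HasDerivAt (fun z : ℂ => (z, p.2)) ((1 : ℂ), (0 : ℂ)) p.1 :=
    (hasDerivAt_id p.1).prodMk (hasDerivAt_const p.1 p.2)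
  have hcomp := H.comp_hasDerivAt p.1 hline
  have hInt := intervalIntegrable_Fprime hh' hw (phi_mem_D hconv hp)
  have heq : (∫ v in (-1:ℝ)..1, (deriv h (phi v p) * w v) • Dphi v) ((1:ℂ), (0:ℂ))
      = T (deriv h) (fun v => w v * ((1 - (v : ℂ)) / 2)) p := by
    rw [ContinuousLinearMap.intervalIntegral_apply hInt]
    refine intervalIntegral.integral_congr fun v _ => ?_
    simp only [ContinuousLinearMap.smul_apply, Dphi_apply, smul_eq_mul]
    ring
  rw [heq] at hcomp
  exact hcomp

/-- Partial derivative of `T` in the second variable. -/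
lemma hasDerivAt_T_snd {D : Set ℂ} (hD : IsOpen D) (hconv : Convex ℝ D)
    {h : ℂ → ℂ} (hh : DifferentiableOn ℂ h D) (hh' : ContinuousOn (deriv h) D)
    {w : ℝ → ℂ} (hw : Continuous w) {p : ℂ × ℂ} (hp : p ∈ D ×ˢ D) :
    HasDerivAt (fun z => T h w (p.1, z))
      (T (deriv h) (fun v => w v * ((1 + (v : ℂ)) / 2)) p) p.2 := by
  have H := hasFDerivAt_T hD hconv hh hh' hw hp
  have hline : HasDerivAt (fun z : ℂ => (p.1, z)) ((0 : ℂ), (1 : ℂ)) p.2 :=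
    (hasDerivAt_const p.2 p.1).prodMk (hasDerivAt_id p.2)
  have hcomp := H.comp_hasDerivAt p.2 hline
  have hInt := intervalIntegrable_Fprime hh' hw (phi_mem_D hconv hp)
  have heq : (∫ v in (-1:ℝ)..1, (deriv h (phi v p) * w v) • Dphi v) ((0:ℂ), (1:ℂ))
      = T (deriv h) (fun v => w v * ((1 + (v : ℂ)) / 2)) p := by
    rw [ContinuousLinearMap.intervalIntegral_apply hInt]
    refine intervalIntegral.integral_congr fun v _ => ?_
    simp only [ContinuousLinearMap.smul_apply, Dphi_apply, smul_eq_mul]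
    ring
  rw [heq] at hcomp
  exact hcomp

/-- The weights appearing in the proof. -/
def w0 (ℓ : ℕ) : ℝ → ℂ := fun v => (1 - (v:ℂ)^2)^ℓ
def wa (ℓ : ℕ) : ℝ → ℂ := fun v => w0 ℓ v * ((1 - (v:ℂ))/2)
def wb (ℓ : ℕ) : ℝ → ℂ := fun v => w0 ℓ v * ((1 + (v:ℂ))/2)
def wc (ℓ : ℕ) : ℝ → ℂ := fun v => wb ℓ v * ((1 - (v:ℂ))/2)

lemma continuous_w0 (ℓ : ℕ) : Continuous (w0 ℓ) := by unfold w0; fun_prop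
lemma continuous_wa (ℓ : ℕ) : Continuous (wa ℓ) := by unfold wa w0; fun_prop
lemma continuous_wb (ℓ : ℕ) : Continuous (wb ℓ) := by unfold wb w0; fun_prop
lemma continuous_wc (ℓ : ℕ) : Continuous (wc ℓ) := by unfold wc wb w0; fun_prop

/-- Integration by parts identity. -/
lemma IBP {D : Set ℂ} (hD : IsOpen D) (hconv : Convex ℝ D)
    {g : ℂ → ℂ} (hg : DifferentiableOn ℂ g D) (ℓ : ℕ) {p : ℂ × ℂ} (hp : p ∈ D ×ˢ D) :
    (p.1 - p.2)^2 * T (deriv (deriv g)) (wc ℓ) p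
      = ((ℓ:ℂ)+1) * (p.1-p.2) * (T (deriv g) (wa ℓ) p - T (deriv g) (wb ℓ) p) := by
  have hφ := phi_mem_D hconv hp
  have han := hg.analyticOnNhd hD
  have hg1 : DifferentiableOn ℂ (deriv g) D := han.deriv.differentiableOn
  have hg2 : DifferentiableOn ℂ (deriv (deriv g)) D := han.deriv.deriv.differentiableOn
  set u : ℝ → ℂ := fun v => deriv g (phi v p) * (1 - (v:ℂ)^2)^(ℓ+1) with hu_def
  set uX : ℝ → ℂ := fun v =>
    (deriv (deriv g) (phi v p) * ((p.2-p.1)/2)) * (1-(v:ℂ)^2)^(ℓ+1) with huX_def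
  set uY : ℝ → ℂ := fun v =>
    deriv g (phi v p) * (((ℓ:ℂ)+1) * (1-(v:ℂ)^2)^ℓ * (-(2*(v:ℂ)))) with huY_def
  have hder : ∀ v ∈ Set.uIcc (-1:ℝ) 1, HasDerivAt u (uX v + uY v) v := by
    intro v hv
    have hφv := hφ v hv
    have inner : HasDerivAt (fun x : ℂ => ((p.2-p.1)*x + p.1 + p.2)/2)
        ((p.2-p.1)*1/2) (v:ℂ) :=
      ((((hasDerivAt_id (v:ℂ)).const_mul (p.2-p.1)).add_const p.1).add_const p.2).div_const 2
    have outer : HasDerivAt (deriv g) (deriv (deriv g) (phi v p)) (phi v p) :=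
      (hg1.differentiableAt (hD.mem_nhds hφv)).hasDerivAt
    have h1 : HasDerivAt (fun x : ℂ => deriv g (((p.2-p.1)*x + p.1 + p.2)/2))
        (deriv (deriv g) (phi v p) * ((p.2-p.1)*1/2)) (v:ℂ) := outer.comp (v:ℂ) (h₂ := deriv g) inner
    have base : HasDerivAt (fun x : ℂ => 1 - x^2) (-((2:ℕ) * (v:ℂ)^(2-1))) (v:ℂ) :=
      (hasDerivAt_pow 2 (v:ℂ)).const_sub 1
    have h2 := base.pow (ℓ+1)
    have total := (h1.mul h2).comp_ofReal
    have : HasDerivAt u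
        (deriv (deriv g) (phi v p) * ((p.2-p.1)*1/2) * (1-(v:ℂ)^2)^(ℓ+1)
          + deriv g (phi v p) * (((ℓ+1 : ℕ):ℂ) * (1-(v:ℂ)^2)^(ℓ+1-1)
              * (-((2:ℕ) * (v:ℂ)^(2-1))))) v := total
    convert this using 1
    simp only [huX_def, huY_def]
    push_cast
    ring
  have hcφ : ContinuousOn (fun v : ℝ => phi v p) (Set.uIcc (-1:ℝ) 1) :=
    (continuous_phi p).continuousOn
  have hcontX : ContinuousOn uX (Set.uIcc (-1:ℝ) 1) := by
    refine ContinuousOn.mul (ContinuousOn.mul ?_ continuousOn_const)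
      (Continuous.continuousOn (by fun_prop))
    exact (hg2.continuousOn).comp hcφ fun v hv => hφ v hv
  have hcontY : ContinuousOn uY (Set.uIcc (-1:ℝ) 1) := by
    refine ContinuousOn.mul ?_ (Continuous.continuousOn (by fun_prop))
    exact (hg1.continuousOn).comp hcφ fun v hv => hφ v hv
  have hint : (∫ v in (-1:ℝ)..1, (uX v + uY v)) = u 1 - u (-1) :=
    intervalIntegral.integral_eq_sub_of_hasDerivAt hder
      ((hcontX.add hcontY).intervalIntegrable)
  have hu0 : u 1 - u (-1) = 0 := by
    simp only [hu_def]
    norm_num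
  have hsplit : (∫ v in (-1:ℝ)..1, (uX v + uY v))
      = (∫ v in (-1:ℝ)..1, uX v) + ∫ v in (-1:ℝ)..1, uY v :=
    intervalIntegral.integral_add hcontX.intervalIntegrable hcontY.intervalIntegrable
  have hX : (∫ v in (-1:ℝ)..1, uX v) = (2*(p.2-p.1)) * T (deriv (deriv g)) (wc ℓ) p := by
    rw [T, ← intervalIntegral.integral_const_mul]
    refine intervalIntegral.integral_congr fun v _ => ?_
    simp only [huX_def, wc, wb, w0, pow_succ]
    ring
  have hY : (∫ v in (-1:ℝ)..1, uY v)
      = (2*((ℓ:ℂ)+1)) * (T (deriv g) (wa ℓ) p - T (deriv g) (wb ℓ) p) := by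
    rw [T, T, ← intervalIntegral.integral_sub
      (integrand_contOn hg1.continuousOn (continuous_wa ℓ) hφ).intervalIntegrable
      (integrand_contOn hg1.continuousOn (continuous_wb ℓ) hφ).intervalIntegrable,
      ← intervalIntegral.integral_const_mul]
    refine intervalIntegral.integral_congr fun v _ => ?_
    simp only [huY_def, wa, wb, w0]
    ring
  have E : (2*(p.2-p.1)) * T (deriv (deriv g)) (wc ℓ) p
      + (2*((ℓ:ℂ)+1)) * (T (deriv g) (wa ℓ) p - T (deriv g) (wb ℓ) p) = 0 := by
    rw [← hX, ← hY, ← hsplit, hint, hu0]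
  linear_combination (-(p.1-p.2)/2) * E

end Statement12Aux

open Statement12Aux in
/-- for a convex open set `D ⊆ ℂ` and `g` holomorphic on `D`, the
function `Ψ_ℓ g` is holomorphic on `D × D` and satisfies `P(Ψ_ℓ g) = −ℓ(ℓ+1) Ψ_ℓ g`. -/
theorem statement12 (D : Set ℂ) (hD : IsOpen D) (hconv : Convex ℝ D) (ℓ : ℕ)
    (g : ℂ → ℂ) (hg : DifferentiableOn ℂ g D) :
    DifferentiableOn ℂ (Psi ℓ g) (D ×ˢ D) ∧
    ∀ p ∈ D ×ˢ D, Pop (Psi ℓ g) p = -((ℓ : ℂ) * ((ℓ : ℂ) + 1)) * Psi ℓ g p := by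
  have han := hg.analyticOnNhd hD
  have hg1 : DifferentiableOn ℂ (deriv g) D := han.deriv.differentiableOn
  have hg2 : DifferentiableOn ℂ (deriv (deriv g)) D := han.deriv.deriv.differentiableOn
  have hPsi : Psi ℓ g = fun p => (p.1 - p.2)^ℓ * T g (w0 ℓ) p := rfl
  constructor
  · -- differentiability
    intro p hp
    have hT : DifferentiableAt ℂ (T g (w0 ℓ)) p :=
      (hasFDerivAt_T hD hconv hg hg1.continuousOn (continuous_w0 ℓ) hp).differentiableAt
    have : DifferentiableAt ℂ (Psi ℓ g) p := by
      rw [hPsi]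
      exact ((differentiable_fst.sub differentiable_snd).differentiableAt.pow ℓ).mul hT
    exact this.differentiableWithinAt
  · intro p hp
    -- first partials of Psi, at any q ∈ D ×ˢ D
    have P1 : ∀ q ∈ D ×ˢ D, pd1 (Psi ℓ g) q
        = (ℓ:ℂ) * ((q.1-q.2)^(ℓ-1) * T g (w0 ℓ) q) + (q.1-q.2)^ℓ * T (deriv g) (wa ℓ) q := by
      intro q hq
      have hpow : HasDerivAt (fun z => (z - q.2)^ℓ)
          ((ℓ:ℂ) * (q.1-q.2)^(ℓ-1) * 1) q.1 := ((hasDerivAt_id q.1).sub_const q.2).pow ℓ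
      have hA1 : HasDerivAt (fun z => T g (w0 ℓ) (z, q.2)) (T (deriv g) (wa ℓ) q) q.1 :=
        hasDerivAt_T_fst hD hconv hg hg1.continuousOn (continuous_w0 ℓ) hq
      have hmul := hpow.mul hA1
      have : HasDerivAt (fun z => Psi ℓ g (z, q.2))
          ((ℓ:ℂ) * (q.1-q.2)^(ℓ-1) * 1 * T g (w0 ℓ) (q.1, q.2)
            + (q.1-q.2)^ℓ * T (deriv g) (wa ℓ) q) q.1 := hmul
      have hd := this.deriv
      show deriv (fun z => Psi ℓ g (z, q.2)) q.1 = _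
      rw [hd]; ring
    have P2 : ∀ q ∈ D ×ˢ D, pd2 (Psi ℓ g) q
        = -((ℓ:ℂ) * ((q.1-q.2)^(ℓ-1) * T g (w0 ℓ) q)) + (q.1-q.2)^ℓ * T (deriv g) (wb ℓ) q := by
      intro q hq
      have hpow : HasDerivAt (fun z => (q.1 - z)^ℓ)
          ((ℓ:ℂ) * (q.1-q.2)^(ℓ-1) * (-1)) q.2 := ((hasDerivAt_id q.2).const_sub q.1).pow ℓ
      have hA2 : HasDerivAt (fun z => T g (w0 ℓ) (q.1, z)) (T (deriv g) (wb ℓ) q) q.2 :=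
        hasDerivAt_T_snd hD hconv hg hg1.continuousOn (continuous_w0 ℓ) hq
      have hmul := hpow.mul hA2
      have : HasDerivAt (fun z => Psi ℓ g (q.1, z))
          ((ℓ:ℂ) * (q.1-q.2)^(ℓ-1) * (-1) * T g (w0 ℓ) (q.1, q.2)
            + (q.1-q.2)^ℓ * T (deriv g) (wb ℓ) q) q.2 := hmul
      have hd := this.deriv
      show deriv (fun z => Psi ℓ g (q.1, z)) q.2 = _
      rw [hd]; ring
    -- the mixed second partial at p
    have hGev : (fun z => pd2 (Psi ℓ g) (z, p.2)) =ᶠ[nhds p.1]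
        (fun z => -((ℓ:ℂ) * (((z,p.2).1-(z,p.2).2)^(ℓ-1) * T g (w0 ℓ) (z,p.2)))
          + ((z,p.2).1-(z,p.2).2)^ℓ * T (deriv g) (wb ℓ) (z,p.2)) := by
      filter_upwards [hD.mem_nhds hp.1] with z hz
      exact P2 (z, p.2) ⟨hz, hp.2⟩
    have hGd : HasDerivAt
        (fun z => -((ℓ:ℂ) * ((z - p.2)^(ℓ-1) * T g (w0 ℓ) (z,p.2)))
          + (z - p.2)^ℓ * T (deriv g) (wb ℓ) (z,p.2))
        (-((ℓ:ℂ) * ((↑(ℓ-1) * (p.1-p.2)^(ℓ-1-1) * 1) * T g (w0 ℓ) p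
              + (p.1-p.2)^(ℓ-1) * T (deriv g) (wa ℓ) p))
          + (((ℓ:ℂ) * (p.1-p.2)^(ℓ-1) * 1) * T (deriv g) (wb ℓ) p
              + (p.1-p.2)^ℓ * T (deriv (deriv g)) (wc ℓ) p)) p.1 := by
      have hpow1 : HasDerivAt (fun z => (z - p.2)^(ℓ-1))
          ((↑(ℓ-1) : ℂ) * (p.1-p.2)^(ℓ-1-1) * 1) p.1 :=
        ((hasDerivAt_id p.1).sub_const p.2).pow (ℓ-1)
      have hpow : HasDerivAt (fun z => (z - p.2)^ℓ)
          ((ℓ:ℂ) * (p.1-p.2)^(ℓ-1) * 1) p.1 := ((hasDerivAt_id p.1).sub_const p.2).pow ℓ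
      have hA1 : HasDerivAt (fun z => T g (w0 ℓ) (z, p.2)) (T (deriv g) (wa ℓ) p) p.1 :=
        hasDerivAt_T_fst hD hconv hg hg1.continuousOn (continuous_w0 ℓ) hp
      have hB1 : HasDerivAt (fun z => T (deriv g) (wb ℓ) (z, p.2))
          (T (deriv (deriv g)) (wc ℓ) p) p.1 :=
        hasDerivAt_T_fst hD hconv hg1 hg2.continuousOn (continuous_wb ℓ) hp
      exact (((hpow1.mul hA1).const_mul ((ℓ:ℂ))).neg).add (hpow.mul hB1)
    have Pmix : pd1 (pd2 (Psi ℓ g)) p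
        = -((ℓ:ℂ) * ((↑(ℓ-1) * (p.1-p.2)^(ℓ-1-1) * 1) * T g (w0 ℓ) p
              + (p.1-p.2)^(ℓ-1) * T (deriv g) (wa ℓ) p))
          + (((ℓ:ℂ) * (p.1-p.2)^(ℓ-1) * 1) * T (deriv g) (wb ℓ) p
              + (p.1-p.2)^ℓ * T (deriv (deriv g)) (wc ℓ) p) := by
      show deriv (fun z => pd2 (Psi ℓ g) (z, p.2)) p.1 = _
      rw [hGev.deriv_eq]
      exact hGd.deriv
    have hIBP := IBP hD hconv hg ℓ hp
    -- assemble everything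
    rw [show Pop (Psi ℓ g) p = (p.1 - p.2)^2 * pd1 (pd2 (Psi ℓ g)) p
        - (p.1 - p.2) * (pd1 (Psi ℓ g) p - pd2 (Psi ℓ g) p) from rfl,
      Pmix, P1 p hp, P2 p hp, hPsi]
    set δ := p.1 - p.2
    set A := T g (w0 ℓ) p
    set B1 := T (deriv g) (wa ℓ) p
    set B2 := T (deriv g) (wb ℓ) p
    set CC := T (deriv (deriv g)) (wc ℓ) p
    show δ^2 * _ - δ * _ = -((ℓ:ℂ) * ((ℓ:ℂ)+1)) * (δ^ℓ * A)
    rcases ℓ with _ | _ | n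
    · norm_num
      linear_combination hIBP
    · norm_num
      linear_combination δ * hIBP
    · simp only [show n+1+1-1 = n+1 from rfl, show n+1-1 = n from rfl]
      push_cast at hIBP ⊢
      linear_combination δ^(n+2) * hIBP
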